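/- For α even, α ≥ 2, with B''_{α−2} = ∫₀^∞ t^(n−1−(α−2)+2γ) (ψ'(t))² dt, it holds that B_{α−2} = (n−2γ−α) B''_{α−2} / (n+2γ−α+2), where ψ(t) = d₂ t^(−γ) K_γ(t) solves ψ'' + ((1+2γ)/t) ψ' − ψ = 0 with appropriate decay. -/

import Mathlib

/-!
With `p = n + 1 + 2γ - α`, the equation gives the Pohozaev-type identity
`(t ^ (p + 1) * (ψ' ^ 2 - ψ ^ 2))' = (p - 1 - 4γ) * t ^ p * ψ' ^ 2 - (p + 1) * t ^ p * ψ ^ 2`.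
Integrating over `(0, ∞)`, the boundary terms vanish because `t⁻¹ * t ^ (p + 1) * (ψ' ^ 2 - ψ ^ 2)`
is integrable: after the substitution `t = exp s` this is the fact that `∫ f' = 0` whenever `f`
and `f'` are integrable on `ℝ`. This gives
`(p + 1) * B = (p - 1 - 4γ) * B''`. In the degenerate case `p + 1 = 0` it forces `B'' = 0`,
hence `ψ' = 0` and, by the equation, `ψ = 0`.
-/

open MeasureTheory Set Filter Real Topology

theorem integral_Ioi_zero_eq_zero_of_hasDerivAt {E : Type*} [NormedAddCommGroup E]
    [NormedSpace ℝ E] {f f' : ℝ → E} (hderiv : ∀ x ∈ Ioi (0 : ℝ), HasDerivAt f (f' x) x)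
    (hf' : IntegrableOn f' (Ioi 0)) (hf : IntegrableOn (fun x ↦ x⁻¹ • f x) (Ioi 0)) :
    ∫ x in Ioi 0, f' x = 0 := by
  have hexp : ∀ x ∈ (univ : Set ℝ), HasDerivWithinAt exp (exp x) univ x :=
    fun x _ ↦ (hasDerivAt_exp x).hasDerivWithinAt
  have himage : exp '' univ = Ioi 0 := by rw [image_univ, range_exp]
  have hsubst := integral_image_eq_integral_abs_deriv_smul MeasurableSet.univ hexp
    exp_injective.injOn f'
  have hint := fun g : ℝ → E ↦ integrableOn_image_iff_integrableOn_abs_deriv_smul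
    MeasurableSet.univ hexp exp_injective.injOn g
  simp only [himage, abs_of_pos (exp_pos _), integrableOn_univ, setIntegral_univ] at hsubst hint
  rw [hsubst]
  refine integral_eq_zero_of_hasDerivAt_of_integrable (f := f ∘ exp)
    (fun x ↦ (hderiv _ (exp_pos x)).scomp x (hasDerivAt_exp x)) ((hint f').1 hf') ?_
  simpa [Function.comp_def, smul_smul, (exp_pos _).ne'] using (hint _).1 hf

section BesselEquation

variable {γ p : ℝ} {ψ : ℝ → ℝ}

theorem ContDiffOn.hasDerivAt_and_hasDerivAt_deriv {U : Set ℝ} (hψ : ContDiffOn ℝ 2 ψ U)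
    (hU : IsOpen U) {t : ℝ} (ht : t ∈ U) :
    HasDerivAt ψ (deriv ψ t) t ∧ HasDerivAt (deriv ψ) (deriv (deriv ψ) t) t := by
  have hnhds : U ∈ 𝓝 t := hU.mem_nhds ht
  have hψ' : ContDiffOn ℝ 1 (deriv ψ) U := hψ.deriv_of_isOpen hU (by norm_num)
  exact ⟨((hψ.differentiableOn (by norm_num)).differentiableAt hnhds).hasDerivAt,
    ((hψ'.differentiableOn (by norm_num)).differentiableAt hnhds).hasDerivAt⟩

theorem hasDerivAt_rpow_mul_deriv_sq_sub_sq (hψ : ContDiffOn ℝ 2 ψ (Ioi 0))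
    (hode : ∀ t ∈ Ioi (0 : ℝ), deriv (deriv ψ) t + ((1 + 2 * γ) / t) * deriv ψ t - ψ t = 0)
    {t : ℝ} (ht : 0 < t) :
    HasDerivAt (fun s ↦ s ^ (p + 1) * (deriv ψ s ^ 2 - ψ s ^ 2))
      ((p - 1 - 4 * γ) * (t ^ p * deriv ψ t ^ 2) - (p + 1) * (t ^ p * ψ t ^ 2)) t := by
  obtain ⟨h1, h2⟩ := hψ.hasDerivAt_and_hasDerivAt_deriv isOpen_Ioi ht
  have hpow : HasDerivAt (fun s ↦ s ^ (p + 1)) ((p + 1) * t ^ p) t := by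
    simpa using Real.hasDerivAt_rpow_const (p := p + 1) (Or.inl ht.ne')
  refine (hpow.mul ((h2.pow 2).sub (h1.pow 2))).congr_deriv ?_
  have hψ'' : deriv (deriv ψ) t = ψ t - ((1 + 2 * γ) / t) * deriv ψ t := by
    linarith [hode t ht]
  rw [hψ'', rpow_add ht, rpow_one, Pi.sub_apply, Pi.pow_apply, Pi.pow_apply]
  field_simp
  ring

theorem integral_rpow_mul_sq_eq (hψ : ContDiffOn ℝ 2 ψ (Ioi 0))
    (hode : ∀ t ∈ Ioi (0 : ℝ), deriv (deriv ψ) t + ((1 + 2 * γ) / t) * deriv ψ t - ψ t = 0)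
    (hI : IntegrableOn (fun t ↦ t ^ p * ψ t ^ 2) (Ioi 0))
    (hI' : IntegrableOn (fun t ↦ t ^ p * deriv ψ t ^ 2) (Ioi 0)) :
    (p + 1) * ∫ t in Ioi 0, t ^ p * ψ t ^ 2
      = (p - 1 - 4 * γ) * ∫ t in Ioi 0, t ^ p * deriv ψ t ^ 2 := by
  set F : ℝ → ℝ := fun s ↦ s ^ (p + 1) * (deriv ψ s ^ 2 - ψ s ^ 2)
  have hF : ∀ t ∈ Ioi (0 : ℝ), HasDerivAt F
      ((p - 1 - 4 * γ) * (t ^ p * deriv ψ t ^ 2) - (p + 1) * (t ^ p * ψ t ^ 2)) t :=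
    fun t ht ↦ hasDerivAt_rpow_mul_deriv_sq_sub_sq hψ hode ht
  have hFcont : ContinuousOn (fun t ↦ t⁻¹ • F t) (Ioi 0) := fun t ht ↦
    ((continuousAt_inv₀ (ne_of_gt ht)).smul (hF t ht).continuousAt).continuousWithinAt
  -- `|t⁻¹ F t| ≤ t ^ p * (ψ' t ^ 2 + ψ t ^ 2)`
  have hFint : IntegrableOn (fun t ↦ t⁻¹ • F t) (Ioi 0) := by
    refine (hI'.add hI).mono' (hFcont.aestronglyMeasurable measurableSet_Ioi) ?_
    refine (ae_restrict_iff' measurableSet_Ioi).2 (Eventually.of_forall fun t (ht : 0 < t) ↦ ?_)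
    have hpos : 0 < t ^ p := rpow_pos_of_pos ht p
    rw [smul_eq_mul, Real.norm_eq_abs, abs_le]
    simp only [F, Pi.add_apply, rpow_add ht, rpow_one]
    field_simp
    constructor <;> nlinarith [mul_nonneg hpos.le (sq_nonneg (ψ t)),
      mul_nonneg hpos.le (sq_nonneg (deriv ψ t))]
  have h := integral_Ioi_zero_eq_zero_of_hasDerivAt hF
    ((hI'.const_mul _).sub (hI.const_mul _)) hFint
  rw [integral_sub (hI'.const_mul _) (hI.const_mul _), integral_const_mul,
    integral_const_mul, sub_eq_zero] at h
  exact h.symm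

theorem eqOn_zero_of_integral_rpow_mul_deriv_sq_eq_zero (hψ : ContDiffOn ℝ 2 ψ (Ioi 0))
    (hode : ∀ t ∈ Ioi (0 : ℝ), deriv (deriv ψ) t + ((1 + 2 * γ) / t) * deriv ψ t - ψ t = 0)
    (hI' : IntegrableOn (fun t ↦ t ^ p * deriv ψ t ^ 2) (Ioi 0))
    (h : ∫ t in Ioi 0, t ^ p * deriv ψ t ^ 2 = 0) : EqOn ψ 0 (Ioi 0) := by
  have hnonneg : 0 ≤ᵐ[volume.restrict (Ioi 0)] fun t ↦ t ^ p * deriv ψ t ^ 2 :=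
    (ae_restrict_iff' measurableSet_Ioi).2 (Eventually.of_forall fun t (ht : 0 < t) ↦ by
      positivity)
  have hcont : ContinuousOn (fun t ↦ t ^ p * deriv ψ t ^ 2) (Ioi 0) := fun t ht ↦
    have hψ' := (hψ.hasDerivAt_and_hasDerivAt_deriv isOpen_Ioi ht).2
    ((continuousAt_id.rpow_const (Or.inl (ne_of_gt ht))).mul
      (hψ'.continuousAt.pow 2)).continuousWithinAt
  have hzero := Measure.eqOn_open_of_ae_eq ((integral_eq_zero_iff_of_nonneg_ae hnonneg hI').1 h)
    isOpen_Ioi hcont continuousOn_const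
  have hψ' : EqOn (deriv ψ) 0 (Ioi 0) := fun t (ht : 0 < t) ↦ by
    simpa [(rpow_pos_of_pos ht p).ne'] using hzero ht
  intro t ht
  have hψ'' : deriv (deriv ψ) t = 0 := by
    rw [(hψ'.eventuallyEq_of_mem (isOpen_Ioi.mem_nhds ht)).deriv_eq, Pi.zero_def, deriv_const]
  simpa [hψ' ht, hψ''] using hode t ht

end BesselEquation

theorem stmt_5 (n : ℕ) (γ : ℝ) (hγ : γ ∈ Set.Ioo (0:ℝ) 1)
    (ψ : ℝ → ℝ)
    (hsmooth : ContDiffOn ℝ 2 ψ (Set.Ioi 0))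
    (hode : ∀ t ∈ Set.Ioi (0:ℝ),
      deriv (deriv ψ) t + ((1 + 2*γ)/t) * deriv ψ t - ψ t = 0)
    (α : ℕ)
    (hI1 : MeasureTheory.IntegrableOn
      (fun t => t ^ (-((α:ℝ) - 2) + 2*γ) * (ψ t)^2 * t ^ ((n:ℝ) - 1)) (Set.Ioi 0))
    (hI2 : MeasureTheory.IntegrableOn
      (fun t => t ^ (-((α:ℝ) - 2) + 2*γ) * (deriv ψ t)^2 * t ^ ((n:ℝ) - 1)) (Set.Ioi 0)) :
    ∫ t in Set.Ioi (0:ℝ), t ^ (-((α:ℝ) - 2) + 2*γ) * (ψ t)^2 * t ^ ((n:ℝ) - 1)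
      = ((n:ℝ) - 2*γ - α) *
          (∫ t in Set.Ioi (0:ℝ),
            t ^ (-((α:ℝ) - 2) + 2*γ) * (deriv ψ t)^2 * t ^ ((n:ℝ) - 1)) /
          ((n:ℝ) + 2*γ - α + 2) := by
  set p : ℝ := -((α:ℝ) - 2) + 2*γ + ((n:ℝ) - 1)
  have hweight (f : ℝ → ℝ) : EqOn (fun t ↦ t ^ (-((α:ℝ) - 2) + 2*γ) * f t * t ^ ((n:ℝ) - 1))
      (fun t ↦ t ^ p * f t) (Ioi 0) := fun t (ht : 0 < t) ↦ by
    simp only [p, rpow_add ht]; ring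
  have hI := hI1.congr_fun (hweight fun t ↦ ψ t ^ 2) measurableSet_Ioi
  have hI' := hI2.congr_fun (hweight fun t ↦ deriv ψ t ^ 2) measurableSet_Ioi
  have hpohozaev := integral_rpow_mul_sq_eq hsmooth hode hI hI'
  rw [setIntegral_congr_fun measurableSet_Ioi (hweight fun t ↦ ψ t ^ 2),
    setIntegral_congr_fun measurableSet_Ioi (hweight fun t ↦ deriv ψ t ^ 2),
    show (n:ℝ) + 2*γ - α + 2 = p + 1 by ring, show (n:ℝ) - 2*γ - α = p - 1 - 4*γ by ring]
  rcases eq_or_ne (p + 1) 0 with hp | hp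
  · have hB : ∫ t in Ioi 0, t ^ p * deriv ψ t ^ 2 = 0 := by
      rw [hp, zero_mul, eq_comm, mul_eq_zero] at hpohozaev
      exact hpohozaev.resolve_left (by linarith [hγ.1])
    have hψ := eqOn_zero_of_integral_rpow_mul_deriv_sq_eq_zero hsmooth hode hI' hB
    rw [hp, div_zero]
    exact setIntegral_eq_zero_of_forall_eq_zero fun t ht ↦ by simp [hψ ht]
  · rw [eq_div_iff hp, ← hpohozaev]
    ring
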